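/- The element y_0 y_1⁻¹ lies in the group S. -/

import Mathlib

/-- The Cantor set of infinite binary sequences. -/
abbrev Cantor : Type := ℕ → Bool

/-- Concatenation of a finite binary sequence with an infinite binary sequence. -/
def cat (s : List Bool) (η : Cantor) : Cantor :=
  fun n => if h : n < s.length then s.get ⟨n, h⟩ else η (n - s.length)

/-- `s` is a (finite) prefix of the infinite sequence `ξ`. -/
def IsPrefixOf (s : List Bool) (ξ : Cantor) : Prop := ∃ η : Cantor, ξ = cat s η

/-- The group of self-homeomorphisms of a topological space, with
`(f * g) ξ = f (g ξ)` (i.e. in the right-action convention `ξ·(g h) = (ξ·g)·h`,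
the product `g * f` corresponds to the word "apply `f`, then `g`"). -/
instance {α : Type*} [TopologicalSpace α] : Group (α ≃ₜ α) where
  mul f g := g.trans f
  one := Homeomorph.refl α
  inv := Homeomorph.symm
  mul_assoc _ _ _ := Homeomorph.ext fun _ => rfl
  one_mul _ := Homeomorph.ext fun _ => rfl
  mul_one _ := Homeomorph.ext fun _ => rfl
  inv_mul_cancel f := Homeomorph.ext fun ξ => f.symm_apply_apply ξ

@[simp] lemma homeo_mul_apply {α : Type*} [TopologicalSpace α] (f g : α ≃ₜ α) (ξ : α) :
    (f * g) ξ = f (g ξ) := rfl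

@[simp] lemma homeo_one_apply {α : Type*} [TopologicalSpace α] (ξ : α) :
    (1 : α ≃ₜ α) ξ = ξ := rfl

@[simp] lemma homeo_inv_apply {α : Type*} [TopologicalSpace α] (f : α ≃ₜ α) (ξ : α) :
    (f⁻¹ : α ≃ₜ α) ξ = f.symm ξ := rfl

/-- The data of the basic homeomorphisms `x`, `y`, `x_s`, `y_s`, `p_n` of the Cantor
set, together with their recursive defining equations. -/
structure LMData where
  x : Cantor ≃ₜ Cantor
  y : Cantor ≃ₜ Cantor
  xx : List Bool → Cantor ≃ₜ Cantor
  yy : List Bool → Cantor ≃ₜ Cantor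
  p : ℕ → Cantor ≃ₜ Cantor
  hx00 : ∀ η, x (cat [false, false] η) = cat [false] η
  hx01 : ∀ η, x (cat [false, true] η) = cat [true, false] η
  hx1 : ∀ η, x (cat [true] η) = cat [true, true] η
  hy00 : ∀ η, y (cat [false, false] η) = cat [false] (y η)
  hy01 : ∀ η, y (cat [false, true] η) = cat [true, false] (y.symm η)
  hy1 : ∀ η, y (cat [true] η) = cat [true, true] (y η)
  hxx : ∀ s η, xx s (cat s η) = cat s (x η)
  hxx' : ∀ s ξ, ¬ IsPrefixOf s ξ → xx s ξ = ξ
  hyy : ∀ s η, yy s (cat s η) = cat s (y η)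
  hyy' : ∀ s ξ, ¬ IsPrefixOf s ξ → yy s ξ = ξ
  hp1 : ∀ n k η, k < n → p n (cat (List.replicate k true ++ [false]) η) =
      cat (List.replicate (k + 1) true ++ [false]) η
  hp2 : ∀ n η, p n (cat (List.replicate n true ++ [false]) η) =
      cat (List.replicate (n + 1) true) η
  hp3 : ∀ n η, p n (cat (List.replicate (n + 1) true) η) = cat [false] η

/-- Thompson's group `T`, generated by all `x_s` and all `p_n`. -/
def Tgrp (D : LMData) : Subgroup (Cantor ≃ₜ Cantor) :=
  Subgroup.closure (Set.range D.xx ∪ Set.range D.p)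

/-- The group `Ŝ`, generated by all `x_s`, all `y_s` and all `p_n`. -/
def Shat (D : LMData) : Subgroup (Cantor ≃ₜ Cantor) :=
  Subgroup.closure (Set.range D.xx ∪ Set.range D.yy ∪ Set.range D.p)

/-- The homeomorphism `y₁₀ y₁₁₀⁻¹` (right-action word: first `y₁₀`, then `y₁₁₀⁻¹`). -/
def sgen (D : LMData) : Cantor ≃ₜ Cantor :=
  (D.yy [true, true, false])⁻¹ * D.yy [true, false]

/-- The group `S`, generated by Thompson's group `T` together with `y₁₀ y₁₁₀⁻¹`. -/
def Sgrp (D : LMData) : Subgroup (Cantor ≃ₜ Cantor) :=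
  Subgroup.closure (↑(Tgrp D) ∪ {sgen D})

/-- The Lodha–Moore group `_yG_y`, generated by all `x_s` and all `y_s`. -/
def LMgrp (D : LMData) : Subgroup (Cantor ≃ₜ Cantor) :=
  Subgroup.closure (Set.range D.xx ∪ Set.range D.yy)


/-!
All products below are in the right-action order of the paper. Expanding `y_0` and `y_1` by the
Lodha–Moore relation `y_s = x_s y_{s0} y_{s10}⁻¹ y_{s11}` and moving `y_{011}` past the
disjointly supported `y_{110}` and `y_{111}` gives
`y_0 y_1⁻¹ = x_0 (y_{00} y_{010}⁻¹) (y_{110} y_{111}⁻¹) (y_{011} y_{10}⁻¹) x_1⁻¹`.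
Conjugating `y_a` by a map that sends the cone of `a` onto the cone of `b` by prefix
replacement yields `y_b`, so each bracket is a conjugate of `y_{10} y_{110}⁻¹` by an element
of `T` (namely `p_0`, `p_2` and `x⁻¹ x_0`).
-/

lemma cat_nil (η : Cantor) : cat [] η = η := by
  funext n; simp [cat]

lemma cat_append (s t : List Bool) (η : Cantor) : cat (s ++ t) η = cat s (cat t η) := by
  funext n
  simp only [cat, List.length_append, List.get_eq_getElem]
  by_cases h₁ : n < s.length
  · rw [dif_pos (by omega), dif_pos h₁, List.getElem_append_left h₁]
  · rw [dif_neg h₁]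
    by_cases h₂ : n < s.length + t.length
    · rw [dif_pos h₂, dif_pos (by omega), List.getElem_append_right (by omega)]
    · rw [dif_neg h₂, dif_neg (by omega), Nat.sub_sub]

lemma cat_cons (b : Bool) (s : List Bool) (η : Cantor) : cat (b :: s) η = cat [b] (cat s η) :=
  cat_append [b] s η

lemma cat_injective (s : List Bool) : Function.Injective (cat s) := by
  intro η θ h
  funext n
  simpa [cat] using congrFun h (n + s.length)

lemma cat_singleton_inj {b c : Bool} {η θ : Cantor} :
    cat [b] η = cat [c] θ ↔ b = c ∧ η = θ := by
  refine ⟨fun h => ⟨congrFun h 0, funext fun n => ?_⟩, ?_⟩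
  · simpa [cat] using congrFun h (n + 1)
  · rintro ⟨rfl, rfl⟩
    rfl

lemma eq_cat_head_tail (ξ : Cantor) : ξ = cat [ξ 0] (fun n => ξ (n + 1)) := by
  funext n
  cases n <;> simp [cat]

@[simp] lemma isPrefixOf_cons_cat_cons {a b : Bool} {s t : List Bool} {η : Cantor} :
    IsPrefixOf (a :: s) (cat (b :: t) η) ↔ a = b ∧ IsPrefixOf s (cat t η) := by
  rw [cat_cons b t η]
  constructor
  · rintro ⟨θ, h⟩
    rw [cat_cons a s θ, cat_singleton_inj] at h
    exact ⟨h.1.symm, θ, h.2⟩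
  · rintro ⟨rfl, θ, h⟩
    exact ⟨θ, by rw [h, ← cat_cons a s θ]⟩

lemma isPrefixOf_append_cat_iff {s t : List Bool} {η : Cantor} :
    IsPrefixOf (s ++ t) (cat s η) ↔ IsPrefixOf t η := by
  constructor
  · rintro ⟨θ, h⟩
    exact ⟨θ, cat_injective s (by rw [h, cat_append])⟩
  · rintro ⟨θ, rfl⟩
    exact ⟨θ, (cat_append s t θ).symm⟩

lemma not_isPrefixOf_append {s t : List Bool} {ξ : Cantor} (h : ¬ IsPrefixOf s ξ) :
    ¬ IsPrefixOf (s ++ t) ξ := by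
  rintro ⟨η, rfl⟩
  exact h ⟨cat t η, cat_append s t η⟩

lemma apply_cat_append {f : Cantor ≃ₜ Cantor} {a b : List Bool}
    (hf : ∀ η, f (cat a η) = cat b η) (t : List Bool) (η : Cantor) :
    f (cat (a ++ t) η) = cat (b ++ t) η := by
  rw [cat_append, hf, cat_append]

lemma cantor_cases (ξ : Cantor) :
    (∃ θ, ξ = cat [false, false] θ) ∨ (∃ θ, ξ = cat [false, true] θ) ∨
      ∃ θ, ξ = cat [true] θ := by
  rw [eq_cat_head_tail ξ, eq_cat_head_tail (fun n => ξ (n + 1))]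
  cases ξ 0 <;> cases ξ 1
  · exact Or.inl ⟨_, (cat_cons _ _ _).symm⟩
  · exact Or.inr (Or.inl ⟨_, (cat_cons _ _ _).symm⟩)
  all_goals exact Or.inr (Or.inr ⟨_, rfl⟩)

/-- The relation of `x_s` to `x` and of `y_s` to `y`. -/
structure IsConeCopy (h : List Bool → Cantor ≃ₜ Cantor) (g : Cantor ≃ₜ Cantor) :
    Prop where
  apply_cat : ∀ s η, h s (cat s η) = cat s (g η)
  apply_of_not_isPrefixOf : ∀ s ξ, ¬ IsPrefixOf s ξ → h s ξ = ξ

namespace IsConeCopy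

variable {h : List Bool → Cantor ≃ₜ Cantor} {g : Cantor ≃ₜ Cantor}

lemma nil (hh : IsConeCopy h g) : h [] = g :=
  Homeomorph.ext fun η => by simpa only [cat_nil] using hh.apply_cat [] η

lemma apply_append_cat (hh : IsConeCopy h g) (s t : List Bool) (η : Cantor) :
    h (s ++ t) (cat s η) = cat s (h t η) := by
  by_cases ht : IsPrefixOf t η
  · obtain ⟨θ, rfl⟩ := ht
    rw [← cat_append, hh.apply_cat, hh.apply_cat, cat_append]
  · rw [hh.apply_of_not_isPrefixOf _ _ ht,
      hh.apply_of_not_isPrefixOf _ _ (mt isPrefixOf_append_cat_iff.mp ht)]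

lemma symm_apply_append_cat (hh : IsConeCopy h g) (s t : List Bool) (η : Cantor) :
    (h (s ++ t)).symm (cat s η) = cat s ((h t).symm η) := by
  rw [Homeomorph.symm_apply_eq, hh.apply_append_cat, Homeomorph.apply_symm_apply]

lemma symm_apply_cat (hh : IsConeCopy h g) (s : List Bool) (η : Cantor) :
    (h s).symm (cat s η) = cat s (g.symm η) := by
  simpa only [List.append_nil, hh.nil] using hh.symm_apply_append_cat s [] η

lemma symm_apply_of_not_isPrefixOf (hh : IsConeCopy h g) {s : List Bool} {ξ : Cantor}
    (hs : ¬ IsPrefixOf s ξ) : (h s).symm ξ = ξ := by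
  rw [Homeomorph.symm_apply_eq, hh.apply_of_not_isPrefixOf s ξ hs]

/-- Injectivity of `f` forces `f` to map the complement of the cone `a` into the complement of
the cone `b`, so both sides are trivial there. -/
lemma conj_eq (hh : IsConeCopy h g) {f : Cantor ≃ₜ Cantor} {a b : List Bool}
    (hf : ∀ η, f (cat a η) = cat b η) : f * h a * f⁻¹ = h b := by
  refine Homeomorph.ext fun ξ => ?_
  simp only [homeo_mul_apply, homeo_inv_apply]
  by_cases hb : IsPrefixOf b ξ
  · obtain ⟨η, rfl⟩ := hb
    rw [← hf, Homeomorph.symm_apply_apply, hh.apply_cat, hf, hf, hh.apply_cat]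
  · have ha : ¬ IsPrefixOf a (f.symm ξ) := by
      rintro ⟨η, hη⟩
      exact hb ⟨η, by rw [← hf, ← hη, Homeomorph.apply_symm_apply]⟩
    rw [hh.apply_of_not_isPrefixOf _ _ ha, Homeomorph.apply_symm_apply,
      hh.apply_of_not_isPrefixOf _ _ hb]

lemma commute (hh : IsConeCopy h g) {a b : List Bool}
    (hab : ∀ η, ¬ IsPrefixOf b (cat a η)) : Commute (h a) (h b) := by
  have hba : ∀ η, ¬ IsPrefixOf a (cat b η) := fun η ⟨θ, hθ⟩ => hab θ ⟨η, hθ.symm⟩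
  refine Homeomorph.ext fun ξ => ?_
  simp only [homeo_mul_apply]
  by_cases ha : IsPrefixOf a ξ
  · obtain ⟨η, rfl⟩ := ha
    rw [hh.apply_of_not_isPrefixOf b _ (hab η), hh.apply_cat,
      hh.apply_of_not_isPrefixOf b _ (hab _)]
  · by_cases hb : IsPrefixOf b ξ
    · obtain ⟨η, rfl⟩ := hb
      rw [hh.apply_cat, hh.apply_of_not_isPrefixOf a _ (hba _),
        hh.apply_of_not_isPrefixOf a _ ha, hh.apply_cat]
    · rw [hh.apply_of_not_isPrefixOf b _ hb, hh.apply_of_not_isPrefixOf a _ ha,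
        hh.apply_of_not_isPrefixOf b _ hb]

end IsConeCopy

namespace LMData

variable (D : LMData)

lemma isConeCopy_xx : IsConeCopy D.xx D.x := ⟨D.hxx, D.hxx'⟩

lemma isConeCopy_yy : IsConeCopy D.yy D.y := ⟨D.hyy, D.hyy'⟩

lemma y_eq : D.y = D.yy [true, true] * (D.yy [true, false])⁻¹ * D.yy [false] * D.x := by
  have hy := D.isConeCopy_yy
  refine Homeomorph.ext fun ξ => ?_
  simp only [homeo_mul_apply, homeo_inv_apply]
  rcases cantor_cases ξ with ⟨θ, rfl⟩ | ⟨θ, rfl⟩ | ⟨θ, rfl⟩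
  · rw [D.hy00, D.hx00, hy.apply_cat,
      hy.symm_apply_of_not_isPrefixOf (s := [true, false]) (by simp),
      hy.apply_of_not_isPrefixOf [true, true] _ (by simp)]
  · rw [D.hy01, D.hx01, hy.apply_of_not_isPrefixOf [false] _ (by simp), hy.symm_apply_cat,
      hy.apply_of_not_isPrefixOf [true, true] _ (by simp)]
  · rw [D.hy1, D.hx1, hy.apply_of_not_isPrefixOf [false] _ (by simp),
      hy.symm_apply_of_not_isPrefixOf (s := [true, false]) (by simp), hy.apply_cat]

lemma yy_eq (s : List Bool) :
    D.yy s = D.yy (s ++ [true, true]) * (D.yy (s ++ [true, false]))⁻¹ * D.yy (s ++ [false]) *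
      D.xx s := by
  have hx := D.isConeCopy_xx
  have hy := D.isConeCopy_yy
  refine Homeomorph.ext fun ξ => ?_
  simp only [homeo_mul_apply, homeo_inv_apply]
  by_cases hs : IsPrefixOf s ξ
  · obtain ⟨η, rfl⟩ := hs
    rw [hx.apply_cat, hy.apply_append_cat, hy.symm_apply_append_cat, hy.apply_append_cat,
      hy.apply_cat, D.y_eq]
    rfl
  · rw [hx.apply_of_not_isPrefixOf _ _ hs, hy.apply_of_not_isPrefixOf _ _ hs,
      hy.apply_of_not_isPrefixOf _ _ (not_isPrefixOf_append hs),
      hy.symm_apply_of_not_isPrefixOf (not_isPrefixOf_append hs),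
      hy.apply_of_not_isPrefixOf _ _ (not_isPrefixOf_append hs)]

lemma yy₁_inv_mul_yy₀_eq :
    (D.yy [true])⁻¹ * D.yy [false] =
      (D.xx [true])⁻¹ * ((D.yy [true, false])⁻¹ * D.yy [false, true, true]) *
        ((D.yy [true, true, true])⁻¹ * D.yy [true, true, false]) *
        ((D.yy [false, true, false])⁻¹ * D.yy [false, false]) * D.xx [false] := by
  have hy := D.isConeCopy_yy
  have c₁ : Commute (D.yy [false, true, true]) (D.yy [true, true, false]) :=
    hy.commute (by simp)
  have c₂ : Commute (D.yy [false, true, true]) (D.yy [true, true, true])⁻¹ :=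
    (hy.commute (by simp)).inv_right
  have c₃ : Commute (D.yy [true, true, false]) (D.yy [true, true, true])⁻¹ :=
    (hy.commute (by simp)).inv_right
  rw [D.yy_eq [true], D.yy_eq [false]]
  simp only [List.cons_append, List.nil_append, mul_inv_rev, inv_inv, mul_assoc]
  rw [← c₂.left_comm, c₁.symm.left_comm, c₃.left_comm]

lemma xx_mem_Tgrp (s : List Bool) : D.xx s ∈ Tgrp D :=
  Subgroup.subset_closure (Or.inl ⟨s, rfl⟩)

lemma p_mem_Tgrp (n : ℕ) : D.p n ∈ Tgrp D :=
  Subgroup.subset_closure (Or.inr ⟨n, rfl⟩)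

lemma Tgrp_le_Sgrp : Tgrp D ≤ Sgrp D := fun _ hg => Subgroup.subset_closure (Or.inl hg)

lemma sgen_mem_Sgrp : sgen D ∈ Sgrp D := Subgroup.subset_closure (Or.inr rfl)

lemma yy_inv_mul_yy_mem_Sgrp {f : Cantor ≃ₜ Cantor} (hf : f ∈ Tgrp D) {a b : List Bool}
    (ha : ∀ η, f (cat [true, true, false] η) = cat a η)
    (hb : ∀ η, f (cat [true, false] η) = cat b η) :
    (D.yy a)⁻¹ * D.yy b ∈ Sgrp D := by
  have hconj : f * sgen D * f⁻¹ = (D.yy a)⁻¹ * D.yy b := by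
    rw [← D.isConeCopy_yy.conj_eq ha, ← D.isConeCopy_yy.conj_eq hb, sgen]
    group
  rw [← hconj]
  have hfS := D.Tgrp_le_Sgrp hf
  exact mul_mem (mul_mem hfS D.sgen_mem_Sgrp) (inv_mem hfS)

lemma p_zero_apply_cat_true (η : Cantor) : D.p 0 (cat [true] η) = cat [false] η :=
  D.hp3 0 η

lemma x_symm_apply_cat_true_true (η : Cantor) :
    D.x.symm (cat [true, true] η) = cat [true] η := by
  rw [Homeomorph.symm_apply_eq, D.hx1]

lemma x_symm_apply_cat_true_false (η : Cantor) :
    D.x.symm (cat [true, false] η) = cat [false, true] η := by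
  rw [Homeomorph.symm_apply_eq, D.hx01]

lemma yy₁₀_inv_mul_yy₀₁₁_mem_Sgrp :
    (D.yy [true, false])⁻¹ * D.yy [false, true, true] ∈ Sgrp D := by
  have hx := D.isConeCopy_xx
  refine D.yy_inv_mul_yy_mem_Sgrp (f := D.xx [false] * (D.xx [])⁻¹)
    (mul_mem (D.xx_mem_Tgrp _) (inv_mem (D.xx_mem_Tgrp _)))
    (apply_cat_append (a := [true, true]) (b := [true]) (fun η => ?_) [false]) (fun η => ?_)
  · rw [homeo_mul_apply, homeo_inv_apply, hx.nil, x_symm_apply_cat_true_true,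
      hx.apply_of_not_isPrefixOf _ _ (by simp)]
  · rw [homeo_mul_apply, homeo_inv_apply, hx.nil, x_symm_apply_cat_true_false, cat_cons,
      hx.apply_cat, D.hx1, ← cat_append]
    rfl

lemma yy₁₁₁_inv_mul_yy₁₁₀_mem_Sgrp :
    (D.yy [true, true, true])⁻¹ * D.yy [true, true, false] ∈ Sgrp D :=
  D.yy_inv_mul_yy_mem_Sgrp (D.p_mem_Tgrp 2) (D.hp2 2) (D.hp1 2 1 · (by norm_num))

lemma yy₀₁₀_inv_mul_yy₀₀_mem_Sgrp :
    (D.yy [false, true, false])⁻¹ * D.yy [false, false] ∈ Sgrp D :=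
  D.yy_inv_mul_yy_mem_Sgrp (D.p_mem_Tgrp 0) (apply_cat_append D.p_zero_apply_cat_true _)
    (apply_cat_append D.p_zero_apply_cat_true _)

end LMData

/-- the element `y₀ y₁⁻¹` (right-action word: first `y₀`, then `y₁⁻¹`)
lies in `S`. -/
theorem statement17 (D : LMData) :
    (D.yy [true])⁻¹ * D.yy [false] ∈ Sgrp D := by
  rw [D.yy₁_inv_mul_yy₀_eq]
  have hxS (s : List Bool) : D.xx s ∈ Sgrp D := D.Tgrp_le_Sgrp (D.xx_mem_Tgrp s)
  exact mul_mem (mul_mem (mul_mem (mul_mem (inv_mem (hxS _))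
    D.yy₁₀_inv_mul_yy₀₁₁_mem_Sgrp) D.yy₁₁₁_inv_mul_yy₁₁₀_mem_Sgrp)
    D.yy₀₁₀_inv_mul_yy₀₀_mem_Sgrp) (hxS _)
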